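/- Let Q ⊆ [n]^d be a cube with dim(Q) ≥ 1, and suppose Q is internally spanned by A ⊆ [n]^d. Then there exist proper subcubes S, T ⊊ Q and disjoint sets A_1, A_2 ⊆ A ∩ Q such that [A_1] = S, [A_2] = T, and [S ∪ T] = Q. -/

import Mathlib

/-- Adjacency in the grid graph `[n]^d`: two vertices are adjacent iff they differ
by exactly 1 in a single coordinate. -/
def gridAdj (n d : ℕ) (x y : Fin d → Fin n) : Prop :=
  ∃ i, ((x i : ℕ) + 1 = (y i : ℕ) ∨ (y i : ℕ) + 1 = (x i : ℕ)) ∧ ∀ j, j ≠ i → x j = y j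

/-- The grid graph `[n]^d`. -/
def gridGraph (n d : ℕ) : SimpleGraph (Fin d → Fin n) where
  Adj := gridAdj n d
  symm := by
    constructor
    rintro x y ⟨i, h1, h2⟩
    exact ⟨i, h1.symm, fun j hj => (h2 j hj).symm⟩
  loopless := by
    constructor
    rintro x ⟨i, h1, -⟩
    omega

/-- Graph distance from a vertex to a set in the grid graph. -/
noncomputable def gridSetDist (n d : ℕ) (x : Fin d → Fin n) (S : Set (Fin d → Fin n)) : ℕ :=
  sInf (Set.image (fun y => (gridGraph n d).dist x y) S)

/-- One step of `r`-neighbour bootstrap percolation. -/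
def bootStep {V : Type*} (adj : V → V → Prop) (r : ℕ) (A : Set V) : Set V :=
  A ∪ {v | r ≤ {u | adj v u ∧ u ∈ A}.ncard}

/-- The closure `[A]` of a set under `r`-neighbour bootstrap percolation. -/
def bootClosure {V : Type*} (adj : V → V → Prop) (r : ℕ) (A : Set V) : Set V :=
  ⋃ t, (bootStep adj r)^[t] A

/-- The dimension of a cube in `[n]^d`: the sum over coordinates of
(number of values taken in that coordinate minus one). -/
noncomputable def cubeDim {n d : ℕ} (Q : Set (Fin d → Fin n)) : ℕ :=
  ∑ i : Fin d, ((Set.image (fun x => x i) Q).ncard - 1)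

/-- A cube in `[n]^d` is a (nonempty) product of integer intervals. -/
def IsCube {n d : ℕ} (Q : Set (Fin d → Fin n)) : Prop :=
  ∃ lo hi : Fin d → Fin n, (∀ i, lo i ≤ hi i) ∧
    Q = {x | ∀ i, lo i ≤ x i ∧ x i ≤ hi i}

/-- A hypercube in `[n]^d` is a cube all of whose sides have length 1 or 2,
i.e. a copy of some `[2]^m`. -/
def IsHypercube {n d : ℕ} (Q : Set (Fin d → Fin n)) : Prop :=
  ∃ lo hi : Fin d → Fin n, (∀ i, lo i ≤ hi i ∧ (hi i : ℕ) ≤ (lo i : ℕ) + 1) ∧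
    Q = {x | ∀ i, lo i ≤ x i ∧ x i ≤ hi i}

/-- `Q` is internally spanned by `A`: the bootstrap closure of `A ∩ Q` is `Q`. -/
def IntSpans (n d : ℕ) (A Q : Set (Fin d → Fin n)) : Prop :=
  bootClosure (gridAdj n d) 2 (A ∩ Q) = Q

/-- A set is constant on the coordinates in `J`. -/
def ConstOn {n d : ℕ} (J : Set (Fin d)) (C : Set (Fin d → Fin n)) : Prop :=
  ∀ i ∈ J, ∀ x ∈ C, ∀ y ∈ C, x i = y i

/-- `C` belongs to `Q⟨J⟩`: `C` is a maximal subcube of `Q` constant on the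
coordinates in `J`. -/
def MaxConstSubcube (n d : ℕ) (Q : Set (Fin d → Fin n)) (J : Set (Fin d))
    (C : Set (Fin d → Fin n)) : Prop :=
  IsCube C ∧ C ⊆ Q ∧ ConstOn J C ∧
    ∀ C', IsCube C' → C' ⊆ Q → ConstOn J C' → C ⊆ C' → C' = C

/-- `{j,k}` is a final pair for `A` in `Q`. -/
def FinalPair (n d : ℕ) (A Q : Set (Fin d → Fin n)) (j k : Fin d) : Prop :=
  IntSpans n d A Q ∧
    ∃ C, MaxConstSubcube n d Q {j, k} C ∧ IntSpans n d A C ∧ (A \ C).ncard = 1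

/-- `{i}` is a final element for `A` in `Q`. -/
def FinalElt (n d : ℕ) (A Q : Set (Fin d → Fin n)) (i : Fin d) : Prop :=
  IntSpans n d A Q ∧
    ∃ C, MaxConstSubcube n d Q {i} C ∧ IntSpans n d A C ∧ (A \ C).ncard = 1

/-- `A` sequentially spans the hypercube `Q` (of dimension `2t`):
`|A| = t+1` and `A` admits an ordering `(a 0, …, a t)` with
`dist (a (j+1), [{a 0,…,a j}]) = 2` for all `j < t`. -/
def SeqSpans (n d : ℕ) (A Q : Set (Fin d → Fin n)) : Prop :=
  ∃ t : ℕ, cubeDim Q = 2 * t ∧ A ⊆ Q ∧ A.ncard = t + 1 ∧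
    bootClosure (gridAdj n d) 2 A = Q ∧
    ∃ a : Fin (t + 1) → (Fin d → Fin n), Function.Injective a ∧ Set.range a = A ∧
      ∀ j : Fin t, gridSetDist n d (a j.succ)
        (bootClosure (gridAdj n d) 2 (a '' {i | (i : ℕ) ≤ (j : ℕ)})) = 2

/-- `{j,k}` is an ending for `A` (in the full cube): some `A' ⊆ A` sequentially
spans one of the maximal subcubes constant on `{j,k}`. -/
def EndingPair (n d : ℕ) (A : Set (Fin d → Fin n)) (j k : Fin d) : Prop :=
  ∃ A', A' ⊆ A ∧ ∃ C, MaxConstSubcube n d Set.univ {j, k} C ∧ SeqSpans n d A' C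

/-- `Δ(b,C)`: the set of directions in which the vertex `b` and the cube `C`
are both constant and differ. -/
def Delta {n d : ℕ} (b : Fin d → Fin n) (C : Set (Fin d → Fin n)) : Set (Fin d) :=
  {i | (∀ x ∈ C, ∀ y ∈ C, x i = y i) ∧ ∀ x ∈ C, x i ≠ b i}

/-- The probability of an event `E` for a random subset `A ~ Bin(V,p)`,
each element included independently with probability `p`. -/
noncomputable def binProb {V : Type*} [Fintype V] (p : ℝ) (E : Finset V → Prop) : ℝ :=
  ∑ A : Finset V,
    Set.indicator {B | E B} (fun B => p ^ B.card * (1 - p) ^ (Fintype.card V - B.card)) A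

/-- The expectation of `f` for a random subset `A ~ Bin(V,p)`. -/
noncomputable def binExp {V : Type*} [Fintype V] (p : ℝ) (f : Finset V → ℝ) : ℝ :=
  ∑ A : Finset V, f A * (p ^ A.card * (1 - p) ^ (Fintype.card V - A.card))

/-- `P(ℓ,p)`: the probability that `A ~ Bin([2]^ℓ,p)` internally spans `[2]^ℓ`. -/
noncomputable def Pprob (ℓ : ℕ) (p : ℝ) : ℝ :=
  binProb p (fun A : Finset (Fin ℓ → Fin 2) =>
    bootClosure (gridAdj 2 ℓ) 2 (↑A : Set (Fin ℓ → Fin 2)) = Set.univ)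

/-- `Q(2ℓ,p)`: the probability that `A ~ Bin([2]^{2ℓ},p)` sequentially
internally spans `[2]^{2ℓ}`. -/
noncomputable def Qprob (ℓ : ℕ) (p : ℝ) : ℝ :=
  binProb p (fun A : Finset (Fin (2 * ℓ) → Fin 2) =>
    SeqSpans 2 (2 * ℓ) (↑A : Set (Fin (2 * ℓ) → Fin 2)) Set.univ)

/-- `|𝒮(ℓ)|`: the number of `(ℓ+1)`-subsets of `[2]^{2ℓ}` which sequentially span it. -/
noncomputable def Scard (ℓ : ℕ) : ℕ :=
  {A : Set (Fin (2 * ℓ) → Fin 2) | SeqSpans 2 (2 * ℓ) A Set.univ}.ncard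

/-- The probability that `A ~ Bin([n]^d,p)` percolates in `r`-neighbour
bootstrap percolation. -/
noncomputable def percProb (n d r : ℕ) (p : ℝ) : ℝ :=
  binProb p (fun A : Finset (Fin d → Fin n) =>
    bootClosure (gridAdj n d) r (↑A : Set (Fin d → Fin n)) = Set.univ)

/-- The critical probability `p_c([n]^d, r)`. -/
noncomputable def pc (n d r : ℕ) : ℝ :=
  sInf {p : ℝ | 0 ≤ p ∧ p ≤ 1 ∧ 1 / 2 ≤ percProb n d r p}

/-- The series `x ↦ ∑_{k≥0} (-1)^k x^k / (2^{k²-k} k!)`, whose smallest positive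
root is `λ ≈ 1.166`. -/
noncomputable def lamSeries (x : ℝ) : ℝ :=
  ∑' k : ℕ, (-1 : ℝ) ^ k * x ^ k / (2 ^ (k ^ 2 - k) * (Nat.factorial k))

/-!
Choose a minimal `K ⊆ A ∩ Q` with `[K] = Q` and start from the partition of `K` into singletons,
whose closures are cubes. While there are at least three parts, two of them have closures at
`ℓ¹`-distance at most 2: otherwise the union of the closures would be closed, hence equal to the
cube `Q`, which is connected. The closure of the union of two cubes at distance at most 2 is their
bounding box (a maximal box inside it that contains one cube can be grown by a layer towards the
other until it contains it too), so the two parts can be merged. Once two parts `X, Y` are left,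
`S = [X]` and `T = [Y]` satisfy `[S ∪ T] = [K] = Q`, and `S, T ≠ Q` by minimality of `K`.
-/

section Bootstrap

variable {V : Type*}

def IsBootClosed (adj : V → V → Prop) (r : ℕ) (C : Set V) : Prop :=
  ∀ v, r ≤ {u | adj v u ∧ u ∈ C}.ncard → v ∈ C

variable {adj : V → V → Prop} {r : ℕ}

theorem subset_bootClosure (A : Set V) : A ⊆ bootClosure adj r A :=
  Set.subset_iUnion (fun t => (bootStep adj r)^[t] A) 0

theorem monotone_iterate_bootStep (A : Set V) : Monotone fun t => (bootStep adj r)^[t] A :=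
  monotone_nat_of_le_succ fun t => by
    rw [Function.iterate_succ_apply']
    exact Set.subset_union_left

theorem IsBootClosed.bootStep_eq {C : Set V} (hC : IsBootClosed adj r C) :
    bootStep adj r C = C :=
  Set.union_eq_self_of_subset_right fun v hv => hC v hv

variable [Finite V]

theorem bootStep_mono {A B : Set V} (h : A ⊆ B) : bootStep adj r A ⊆ bootStep adj r B :=
  Set.union_subset_union h fun v (hv : r ≤ {u | adj v u ∧ u ∈ A}.ncard) =>
    hv.trans (Set.ncard_le_ncard fun u hu => ⟨hu.1, h hu.2⟩)

theorem bootClosure_mono {A B : Set V} (h : A ⊆ B) :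
    bootClosure adj r A ⊆ bootClosure adj r B :=
  Set.iUnion_mono fun t => by
    induction t with
    | zero => exact h
    | succ t ih => simpa only [Function.iterate_succ_apply'] using bootStep_mono ih

theorem bootClosure_subset {A C : Set V} (hAC : A ⊆ C) (hC : IsBootClosed adj r C) :
    bootClosure adj r A ⊆ C :=
  Set.iUnion_subset fun t => by
    induction t with
    | zero => exact hAC
    | succ t ih =>
      rw [Function.iterate_succ_apply', ← hC.bootStep_eq]
      exact bootStep_mono ih

theorem isBootClosed_bootClosure (A : Set V) : IsBootClosed adj r (bootClosure adj r A) := by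
  intro v hv
  -- the finitely many neighbours of `v` in the closure were all infected by some time `t`
  obtain ⟨_, ⟨t, rfl⟩, ht⟩ := DirectedOn.exists_mem_subset_of_finite_of_subset_sUnion
    (Set.range_nonempty _) (monotone_iterate_bootStep A).directed_le.directedOn_range
    (Set.toFinite {u | adj v u ∧ u ∈ bootClosure adj r A})
    (fun u hu => by rw [Set.sUnion_range]; exact hu.2)
  refine Set.mem_iUnion.2 ⟨t + 1, ?_⟩
  rw [Function.iterate_succ_apply']
  exact Or.inr (hv.trans (Set.ncard_le_ncard fun u hu => ⟨hu.1, ht hu⟩))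

theorem IsBootClosed.bootClosure_eq {C : Set V} (hC : IsBootClosed adj r C) :
    bootClosure adj r C = C :=
  (bootClosure_subset subset_rfl hC).antisymm (subset_bootClosure C)

theorem bootClosure_union_bootClosure (X Y : Set V) :
    bootClosure adj r (bootClosure adj r X ∪ bootClosure adj r Y) = bootClosure adj r (X ∪ Y) :=
  (bootClosure_subset (Set.union_subset (bootClosure_mono Set.subset_union_left)
    (bootClosure_mono Set.subset_union_right)) (isBootClosed_bootClosure _)).antisymm
    (bootClosure_mono (Set.union_subset_union (subset_bootClosure X) (subset_bootClosure Y)))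

theorem isBootClosed_of_subsingleton (hr : 2 ≤ r) {C : Set V} (hC : C.Subsingleton) :
    IsBootClosed adj r C := fun v hv => by
  have hsub : {u | adj v u ∧ u ∈ C}.Subsingleton := hC.anti fun u hu => hu.2
  have := Set.ncard_le_one_iff_subsingleton.2 hsub
  omega

theorem IsBootClosed.mem_of_adj_of_adj {C : Set V} (hC : IsBootClosed adj 2 C) {v u w : V}
    (hu : u ∈ C) (hw : w ∈ C) (hne : u ≠ w) (hvu : adj v u) (hvw : adj v w) : v ∈ C :=
  hC v ((Set.one_lt_ncard_iff (Set.toFinite _)).2 ⟨u, w, ⟨hvu, hu⟩, ⟨hvw, hw⟩, hne⟩)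

end Bootstrap

section Grid

variable {n d : ℕ}

local notation "cl" => bootClosure (gridAdj _ _) 2

def l1dist (x y : Fin d → Fin n) : ℕ :=
  ∑ i, Nat.dist (x i) (y i)

theorem l1dist_self (x : Fin d → Fin n) : l1dist x x = 0 := by
  simp [l1dist, Nat.dist_self]

theorem l1dist_eq_zero {x y : Fin d → Fin n} : l1dist x y = 0 ↔ x = y := by
  refine ⟨fun h => funext fun i => Fin.ext (Nat.eq_of_dist_eq_zero ?_), fun h => h ▸ l1dist_self x⟩
  exact Finset.sum_eq_zero_iff.1 h i (Finset.mem_univ i)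

theorem l1dist_triangle (x y z : Fin d → Fin n) : l1dist x z ≤ l1dist x y + l1dist y z := by
  rw [l1dist, l1dist, l1dist, ← Finset.sum_add_distrib]
  exact Finset.sum_le_sum fun i _ => Nat.dist.triangle_inequality _ _ _

theorem l1dist_update (x y : Fin d → Fin n) (i : Fin d) (a : Fin n) :
    l1dist (Function.update x i a) y + Nat.dist (x i) (y i) = l1dist x y + Nat.dist a (y i) := by
  simp only [l1dist, ← Finset.add_sum_erase _ _ (Finset.mem_univ i), Function.update_self]
  rw [Finset.sum_congr rfl fun j hj => by rw [Function.update_of_ne (Finset.ne_of_mem_erase hj)]]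
  ring

theorem gridAdj_iff_l1dist_eq_one {x y : Fin d → Fin n} : gridAdj n d x y ↔ l1dist x y = 1 := by
  constructor
  · rintro ⟨i, hi, hj⟩
    rw [l1dist, Finset.sum_eq_single i (fun j _ hji => by rw [hj j hji, Nat.dist_self])
      (by simp)]
    unfold Nat.dist
    omega
  · intro h
    obtain ⟨i, -, hi⟩ := Finset.exists_ne_zero_of_sum_ne_zero (h ▸ one_ne_zero : l1dist x y ≠ 0)
    rw [l1dist, ← Finset.add_sum_erase _ _ (Finset.mem_univ i)] at h
    have hrest := Finset.sum_eq_zero_iff.1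
      (show ∑ j ∈ Finset.univ.erase i, Nat.dist (x j) (y j) = 0 by omega)
    refine ⟨i, ?_, fun j hj => Fin.ext (Nat.eq_of_dist_eq_zero (hrest j (by simp [hj])))⟩
    unfold Nat.dist at h hi
    omega

theorem gridAdj_comm {x y : Fin d → Fin n} : gridAdj n d x y ↔ gridAdj n d y x :=
  (gridGraph n d).adj_comm x y

theorem gridAdj_update {x : Fin d → Fin n} {i : Fin d} {a : Fin n}
    (h : (x i : ℕ) + 1 = a ∨ (a : ℕ) + 1 = x i) : gridAdj n d x (Function.update x i a) :=
  ⟨i, by rwa [Function.update_self], fun _ hj => (Function.update_of_ne hj _ _).symm⟩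

theorem mem_Icc_iff_forall {lo hi x : Fin d → Fin n} :
    x ∈ Set.Icc lo hi ↔ ∀ j, x j ∈ Set.Icc (lo j) (hi j) := by
  simp only [Set.mem_Icc, Pi.le_def, forall_and]

theorem mem_Icc_update_iff {lo hi x : Fin d → Fin n} {i : Fin d} {a b : Fin n} :
    x ∈ Set.Icc (Function.update lo i a) (Function.update hi i b) ↔
      x i ∈ Set.Icc a b ∧ ∀ j ≠ i, x j ∈ Set.Icc (lo j) (hi j) := by
  simp only [Set.mem_Icc, update_le_iff, le_update_iff]
  exact ⟨fun h => ⟨⟨h.1.1, h.2.1⟩, fun j hj => ⟨h.1.2 j hj, h.2.2 j hj⟩⟩,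
    fun h => ⟨⟨h.1.1, fun j hj => (h.2 j hj).1⟩, h.1.2, fun j hj => (h.2 j hj).2⟩⟩

theorem update_mem_Icc {lo hi x : Fin d → Fin n} {i : Fin d} {a : Fin n}
    (hx : ∀ j ≠ i, x j ∈ Set.Icc (lo j) (hi j)) (ha : a ∈ Set.Icc (lo i) (hi i)) :
    Function.update x i a ∈ Set.Icc lo hi := by
  simpa using (mem_Icc_update_iff (lo := lo) (hi := hi) (i := i) (a := lo i) (b := hi i)).2
    ⟨by simpa using ha, fun j hj => by simpa [hj] using hx j hj⟩

theorem isCube_iff {Q : Set (Fin d → Fin n)} :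
    IsCube Q ↔ ∃ lo hi : Fin d → Fin n, lo ≤ hi ∧ Q = Set.Icc lo hi := by
  simp only [IsCube, Set.Icc, Pi.le_def, forall_and]

theorem cubeDim_eq_zero_of_subsingleton {Q : Set (Fin d → Fin n)} (hQ : Q.Subsingleton) :
    cubeDim Q = 0 :=
  Finset.sum_eq_zero fun _ _ =>
    Nat.sub_eq_zero_of_le (Set.ncard_le_one_iff_subsingleton.2 (hQ.image _))

theorem isBootClosed_Icc (lo hi : Fin d → Fin n) :
    IsBootClosed (gridAdj n d) 2 (Set.Icc lo hi) := by
  intro v hv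
  by_contra hvB
  obtain ⟨k, hk⟩ : ∃ k, v k ∉ Set.Icc (lo k) (hi k) := by
    by_contra! h
    exact hvB (mem_Icc_iff_forall.2 h)
  -- a neighbour of `v` in the box differs from `v` only at `k`, where its value is forced
  have hsub : {u | gridAdj n d v u ∧ u ∈ Set.Icc lo hi}.Subsingleton := by
    have hcoord : ∀ u ∈ {u | gridAdj n d v u ∧ u ∈ Set.Icc lo hi},
        (∀ j ≠ k, v j = u j) ∧ ((v k : ℕ) + 1 = u k ∨ (u k : ℕ) + 1 = v k) := by
      rintro u ⟨⟨j, hj, hvu⟩, hu⟩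
      obtain rfl : j = k := by
        by_contra h
        exact hk (hvu k (Ne.symm h) ▸ mem_Icc_iff_forall.1 hu k)
      exact ⟨hvu, hj⟩
    intro u hu u' hu'
    funext j
    rcases eq_or_ne j k with rfl | hj
    · have hadj := (hcoord u hu).2
      have hadj' := (hcoord u' hu').2
      have hb := mem_Icc_iff_forall.1 hu.2 j
      have hb' := mem_Icc_iff_forall.1 hu'.2 j
      simp only [Set.mem_Icc] at hk hb hb'
      omega
    · rw [← (hcoord u hu).1 j hj, ← (hcoord u' hu').1 j hj]
  have := Set.ncard_le_one_iff_subsingleton.2 hsub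
  omega

variable {C : Set (Fin d → Fin n)}

theorem IsBootClosed.mem_of_adj_of_l1dist_le_one (hC : IsBootClosed (gridAdj n d) 2 C)
    {x u w : Fin d → Fin n} (hu : u ∈ C) (hw : w ∈ C) (hne : u ≠ w) (hxu : gridAdj n d x u)
    (hxw : l1dist x w ≤ 1) : x ∈ C := by
  rcases Nat.le_one_iff_eq_zero_or_eq_one.1 hxw with h | h
  · rwa [l1dist_eq_zero.1 h]
  · exact hC.mem_of_adj_of_adj hu hw hne hxu (gridAdj_iff_l1dist_eq_one.2 h)

theorem exists_gridAdj_step_toward {lo hi x y : Fin d → Fin n} (hx : x ∈ Set.Icc lo hi)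
    (hy : y ∈ Set.Icc lo hi) (hne : x ≠ y) :
    ∃ x' ∈ Set.Icc lo hi, gridAdj n d x x' ∧ l1dist x' y + 1 = l1dist x y := by
  obtain ⟨j, hj⟩ := Function.ne_iff.1 hne
  have hxj := mem_Icc_iff_forall.1 hx j
  have hyj := mem_Icc_iff_forall.1 hy j
  simp only [Set.mem_Icc] at hxj hyj
  obtain ⟨m, hm, hxm, hmy⟩ : ∃ m : Fin n, m ∈ Set.Icc (lo j) (hi j) ∧
      ((x j : ℕ) + 1 = m ∨ (m : ℕ) + 1 = x j) ∧ Nat.dist m (y j) + 1 = Nat.dist (x j) (y j) := by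
    unfold Nat.dist
    rcases lt_or_gt_of_ne hj with h | h
    · exact ⟨⟨x j + 1, by omega⟩, ⟨by simp [Fin.le_def]; omega, by simp [Fin.le_def]; omega⟩,
        by simp, by simp; omega⟩
    · exact ⟨⟨x j - 1, by omega⟩, ⟨by simp [Fin.le_def]; omega, by simp [Fin.le_def]; omega⟩,
        by simp; omega, by simp; omega⟩
  refine ⟨Function.update x j m, update_mem_Icc (fun k _ => mem_Icc_iff_forall.1 hx k) hm,
    gridAdj_update hxm, ?_⟩
  have := l1dist_update x y j m
  omega

theorem exists_gridAdj_mem_not_mem {lo hi x y : Fin d → Fin n} {S : Set (Fin d → Fin n)}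
    (hx : x ∈ Set.Icc lo hi) (hy : y ∈ Set.Icc lo hi) (hxS : x ∈ S) (hyS : y ∉ S) :
    ∃ a ∈ Set.Icc lo hi, ∃ b ∈ Set.Icc lo hi, a ∈ S ∧ b ∉ S ∧ gridAdj n d a b := by
  obtain ⟨N, hN⟩ : ∃ N, l1dist x y = N := ⟨_, rfl⟩
  induction N generalizing x with
  | zero => exact absurd (l1dist_eq_zero.1 hN ▸ hxS) hyS
  | succ N ih =>
    obtain ⟨x', hx', hxx', hdist⟩ :=
      exists_gridAdj_step_toward hx hy (ne_of_mem_of_not_mem hxS hyS)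
    by_cases hx'S : x' ∈ S
    · exact ih hx' hx'S (by omega)
    · exact ⟨x, hx, x', hx', hxS, hx'S, hxx'⟩

theorem IsBootClosed.Icc_update_subset (hC : IsBootClosed (gridAdj n d) 2 C)
    {lo hi x₀ : Fin d → Fin n} (hB : Set.Icc lo hi ⊆ C) {i : Fin d} {c e : Fin n}
    (he : e ∈ Set.Icc (lo i) (hi i)) (hce : (c : ℕ) + 1 = e ∨ (e : ℕ) + 1 = c)
    (hx₀ : x₀ ∈ Set.Icc (Function.update lo i c) (Function.update hi i c)) (hx₀C : x₀ ∈ C) :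
    Set.Icc (Function.update lo i c) (Function.update hi i c) ⊆ C := by
  intro y hy
  by_contra hyC
  obtain ⟨a, ha, b, hb, haC, hbC, hab⟩ := exists_gridAdj_mem_not_mem hx₀ hy hx₀C hyC
  obtain ⟨hai, -⟩ := mem_Icc_update_iff.1 ha
  obtain ⟨hbi, hbj⟩ := mem_Icc_update_iff.1 hb
  simp only [Set.mem_Icc] at hai hbi
  -- the edge `a b` cannot leave `C`: `b` also has the neighbour `update b i e` in the box
  refine hbC (hC.mem_of_adj_of_adj haC (hB (update_mem_Icc hbj he)) (fun h => ?_)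
    (gridAdj_comm.1 hab) (gridAdj_update (by omega)))
  have := congrFun h i
  simp only [Function.update_self] at this
  omega

theorem IsBootClosed.update_mem_of_l1dist_le_two (hC : IsBootClosed (gridAdj n d) 2 C)
    {u w : Fin d → Fin n} {i : Fin d} {c e : Fin n} (he : Function.update u i e ∈ C)
    (hw : w ∈ C) (huw : l1dist u w ≤ 2) (hce : (c : ℕ) + 1 = e ∨ (e : ℕ) + 1 = c)
    (hcw : Nat.dist c (w i) < Nat.dist (u i) (w i)) (hew : e ≠ w i) :
    Function.update u i c ∈ C := by
  refine hC.mem_of_adj_of_l1dist_le_one he hw (fun h => hew (by simpa using congrFun h i)) ?_ ?_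
  · simpa using gridAdj_update (x := Function.update u i c) (i := i) (a := e) (by simpa using hce)
  · have := l1dist_update u w i c
    omega

def MeetsOuterLayer (lo hi : Fin d → Fin n) (S : Set (Fin d → Fin n)) : Prop :=
  ∃ (i : Fin d) (c : Fin n), ((c : ℕ) + 1 = lo i ∨ (hi i : ℕ) + 1 = c) ∧
    (Set.Icc (Function.update lo i c) (Function.update hi i c) ∩ S).Nonempty

theorem MeetsOuterLayer.mono {lo hi : Fin d → Fin n} {S S' : Set (Fin d → Fin n)}
    (h : MeetsOuterLayer lo hi S) (hSS' : S ⊆ S') : MeetsOuterLayer lo hi S' :=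
  let ⟨i, c, hc, hS⟩ := h
  ⟨i, c, hc, hS.mono (Set.inter_subset_inter_right _ hSS')⟩

theorem meetsOuterLayer_of_inter_nonempty {lo hi lT uT : Fin d → Fin n}
    (hBT : (Set.Icc lo hi ∩ Set.Icc lT uT).Nonempty) (hTB : ¬Set.Icc lT uT ⊆ Set.Icc lo hi) :
    MeetsOuterLayer lo hi (Set.Icc lT uT) := by
  obtain ⟨z, hzB, hzT⟩ := hBT
  obtain ⟨i, hi'⟩ : ∃ i, lT i < lo i ∨ hi i < uT i := by
    by_contra! h
    exact hTB (Set.Icc_subset_Icc (fun i => (h i).1) (fun i => (h i).2))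
  have hzi := mem_Icc_iff_forall.1 hzB i
  have hzi' := mem_Icc_iff_forall.1 hzT i
  simp only [Set.mem_Icc] at hzi hzi'
  obtain ⟨c, hc, hcT⟩ : ∃ c : Fin n, ((c : ℕ) + 1 = lo i ∨ (hi i : ℕ) + 1 = c) ∧
      c ∈ Set.Icc (lT i) (uT i) := by
    rcases hi' with h | h
    · exact ⟨⟨lo i - 1, by omega⟩, by simp; omega, by simp [Fin.le_def]; omega,
        by simp [Fin.le_def]; omega⟩
    · exact ⟨⟨hi i + 1, by omega⟩, by simp, by simp [Fin.le_def]; omega,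
        by simp [Fin.le_def]; omega⟩
  refine ⟨i, c, hc, Function.update z i c, mem_Icc_update_iff.2 ⟨by simp, fun j hj => ?_⟩,
    update_mem_Icc (fun j _ => mem_Icc_iff_forall.1 hzT j) hcT⟩
  simpa [hj] using mem_Icc_iff_forall.1 hzB j

theorem IsBootClosed.meetsOuterLayer_of_l1dist_le_two (hC : IsBootClosed (gridAdj n d) 2 C)
    {lo hi lT uT u w : Fin d → Fin n} (hB : Set.Icc lo hi ⊆ C) (hwC : w ∈ C)
    (hu : u ∈ Set.Icc lo hi) (hw : w ∈ Set.Icc lT uT) (huw : l1dist u w ≤ 2)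
    (hBT : ¬(Set.Icc lo hi ∩ Set.Icc lT uT).Nonempty) : MeetsOuterLayer lo hi C := by
  -- the boxes are separated in some direction `i`; step from `u` towards `w` across that face
  have hui := mem_Icc_iff_forall.1 hu
  have hwi := mem_Icc_iff_forall.1 hw
  simp only [Set.mem_Icc] at hui hwi
  rw [Set.Icc_inter_Icc, Set.nonempty_Icc] at hBT
  obtain ⟨i, hi'⟩ : ∃ i, hi i < lT i ∨ uT i < lo i := by
    by_contra! h
    refine hBT fun i => ?_
    have := hui i; have := hwi i; have := h i
    simp only [Pi.sup_apply, Pi.inf_apply, sup_le_iff, le_inf_iff]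
    omega
  have := hui i; have := hwi i
  obtain ⟨c, e, hc, hce, he, hcw, hew⟩ : ∃ c e : Fin n,
      ((c : ℕ) + 1 = lo i ∨ (hi i : ℕ) + 1 = c) ∧ ((c : ℕ) + 1 = e ∨ (e : ℕ) + 1 = c) ∧
      e ∈ Set.Icc (lo i) (hi i) ∧ Nat.dist c (w i) < Nat.dist (u i) (w i) ∧ e ≠ w i := by
    unfold Nat.dist
    rcases hi' with h | h
    · exact ⟨⟨hi i + 1, by omega⟩, hi i, by simp, by simp, ⟨by omega, le_rfl⟩,
        by simp; omega, by intro h'; rw [Fin.ext_iff] at h'; omega⟩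
    · exact ⟨⟨lo i - 1, by omega⟩, lo i, by simp; omega, by simp; omega, ⟨le_rfl, by omega⟩,
        by simp; omega, by intro h'; rw [Fin.ext_iff] at h'; omega⟩
  refine ⟨i, c, hc, Function.update u i c, mem_Icc_update_iff.2 ⟨by simp, fun j hj => ?_⟩,
    hC.update_mem_of_l1dist_le_two (hB (update_mem_Icc (fun j _ => mem_Icc_iff_forall.1 hu j)
      he)) hwC huw hce hcw hew⟩
  simpa [hj] using mem_Icc_iff_forall.1 hu j

theorem IsBootClosed.exists_Icc_ssuperset (hC : IsBootClosed (gridAdj n d) 2 C)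
    {lo hi : Fin d → Fin n} (hlohi : lo ≤ hi) (hB : Set.Icc lo hi ⊆ C)
    (hlayer : MeetsOuterLayer lo hi C) :
    ∃ lo' hi' : Fin d → Fin n, Set.Icc lo hi ⊂ Set.Icc lo' hi' ∧ Set.Icc lo' hi' ⊆ C := by
  obtain ⟨i, c, hc, x₀, hx₀, hx₀C⟩ := hlayer
  obtain ⟨e, he, hce⟩ : ∃ e ∈ Set.Icc (lo i) (hi i), (c : ℕ) + 1 = e ∨ (e : ℕ) + 1 = c := by
    rcases hc with h | h
    · exact ⟨lo i, ⟨le_rfl, hlohi i⟩, Or.inl h⟩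
    · exact ⟨hi i, ⟨hlohi i, le_rfl⟩, Or.inr h⟩
  have hlayer := hC.Icc_update_subset hB he hce hx₀ hx₀C
  have hx₀i := (mem_Icc_update_iff.1 hx₀).1
  simp only [Set.mem_Icc] at hx₀i
  refine ⟨Function.update lo i (min (lo i) c), Function.update hi i (max (hi i) c),
    (Set.ssubset_iff_of_subset (Set.Icc_subset_Icc ?_ ?_)).2 ⟨x₀, ?_, fun h => ?_⟩, ?_⟩
  · exact update_le_iff.2 ⟨min_le_left _ _, fun _ _ => le_rfl⟩
  · exact le_update_iff.2 ⟨le_max_left _ _, fun _ _ => le_rfl⟩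
  · refine mem_Icc_update_iff.2 ⟨⟨?_, ?_⟩, (mem_Icc_update_iff.1 hx₀).2⟩
    · exact (min_le_right _ _).trans hx₀i.1
    · exact hx₀i.2.trans (le_max_right _ _)
  · have := mem_Icc_iff_forall.1 h i
    simp only [Set.mem_Icc] at this
    omega
  · intro x hx
    obtain ⟨hxi, hxj⟩ := mem_Icc_update_iff.1 hx
    simp only [Set.mem_Icc, min_le_iff, le_max_iff] at hxi
    by_cases h : x i = c
    · exact hlayer (mem_Icc_update_iff.2 ⟨⟨h.ge, h.le⟩, hxj⟩)
    · rw [Fin.ext_iff] at h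
      have hxB : x i ∈ Set.Icc (lo i) (hi i) := ⟨by omega, by omega⟩
      simpa using hB (update_mem_Icc hxj hxB)

theorem IsBootClosed.Icc_inf_sup_subset (hC : IsBootClosed (gridAdj n d) 2 C)
    {lS uS lT uT u w : Fin d → Fin n} (hS : Set.Icc lS uS ⊆ C) (hT : Set.Icc lT uT ⊆ C)
    (hu : u ∈ Set.Icc lS uS) (hw : w ∈ Set.Icc lT uT) (huw : l1dist u w ≤ 2) :
    Set.Icc (lS ⊓ lT) (uS ⊔ uT) ⊆ C := by
  obtain ⟨B, hSB, ⟨hBC, lo, hi, rfl⟩, hmax⟩ := exists_maximal_ge_of_wellFoundedGT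
    (fun B => B ⊆ C ∧ ∃ lo hi, B = Set.Icc lo hi) (Set.Icc lS uS) ⟨hS, lS, uS, rfl⟩
  have hTB : Set.Icc lT uT ⊆ Set.Icc lo hi := by
    by_contra hTB
    have hlayer : MeetsOuterLayer lo hi C := by
      by_cases hBT : (Set.Icc lo hi ∩ Set.Icc lT uT).Nonempty
      · exact (meetsOuterLayer_of_inter_nonempty hBT hTB).mono hT
      · exact hC.meetsOuterLayer_of_l1dist_le_two hBC (hT hw) (hSB hu) hw huw hBT
    obtain ⟨lo', hi', hlt, hsub⟩ :=
      hC.exists_Icc_ssuperset ((hSB hu).1.trans (hSB hu).2) hBC hlayer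
    exact hlt.not_subset (hmax ⟨hsub, lo', hi', rfl⟩ hlt.subset)
  obtain ⟨hlS, huS⟩ := (Set.Icc_subset_Icc_iff (hu.1.trans hu.2)).1 hSB
  obtain ⟨hlT, huT⟩ := (Set.Icc_subset_Icc_iff (hw.1.trans hw.2)).1 hTB
  exact (Set.Icc_subset_Icc (le_inf hlS hlT) (sup_le huS huT)).trans hBC

theorem bootClosure_Icc_union_Icc {lS uS lT uT u w : Fin d → Fin n} (hu : u ∈ Set.Icc lS uS)
    (hw : w ∈ Set.Icc lT uT) (huw : l1dist u w ≤ 2) :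
    cl (Set.Icc lS uS ∪ Set.Icc lT uT) = Set.Icc (lS ⊓ lT) (uS ⊔ uT) :=
  (bootClosure_subset (Set.union_subset (Set.Icc_subset_Icc inf_le_left le_sup_left)
      (Set.Icc_subset_Icc inf_le_right le_sup_right)) (isBootClosed_Icc _ _)).antisymm
    ((isBootClosed_bootClosure _).Icc_inf_sup_subset
      (Set.subset_union_left.trans (subset_bootClosure _))
      (Set.subset_union_right.trans (subset_bootClosure _)) hu hw huw)

theorem isCube_bootClosure_union {P P' : Set (Fin d → Fin n)} (hP : IsCube (cl P))
    (hP' : IsCube (cl P')) {u w : Fin d → Fin n} (hu : u ∈ cl P) (hw : w ∈ cl P')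
    (huw : l1dist u w ≤ 2) : IsCube (cl (P ∪ P')) := by
  obtain ⟨lS, uS, -, hS⟩ := isCube_iff.1 hP
  obtain ⟨lT, uT, -, hT⟩ := isCube_iff.1 hP'
  rw [hS] at hu
  rw [hT] at hw
  rw [← bootClosure_union_bootClosure, hS, hT, bootClosure_Icc_union_Icc hu hw huw]
  exact isCube_iff.2 ⟨_, _, inf_le_left.trans ((hu.1.trans hu.2).trans le_sup_left), rfl⟩

theorem isBootClosed_biUnion_of_l1dist {ι : Type*} {s : Finset ι} {F : ι → Set (Fin d → Fin n)}
    (hF : ∀ i ∈ s, IsBootClosed (gridAdj n d) 2 (F i))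
    (hfar : ∀ i ∈ s, ∀ j ∈ s, i ≠ j → ∀ u ∈ F i, ∀ w ∈ F j, 2 < l1dist u w) :
    IsBootClosed (gridAdj n d) 2 (⋃ i ∈ s, F i) := by
  intro v hv
  obtain ⟨u, w, ⟨hvu, hu⟩, ⟨hvw, hw⟩, huw⟩ := (Set.one_lt_ncard_iff (Set.toFinite _)).1 hv
  obtain ⟨i, hi, hui⟩ := Set.mem_iUnion₂.1 hu
  obtain ⟨j, hj, hwj⟩ := Set.mem_iUnion₂.1 hw
  rcases eq_or_ne i j with rfl | hij
  · exact Set.mem_iUnion₂.2 ⟨i, hi, (hF i hi).mem_of_adj_of_adj hui hwj huw hvu hvw⟩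
  · have := hfar i hi j hj hij u hui w hwj
    have := l1dist_triangle u v w
    rw [gridAdj_iff_l1dist_eq_one.1 (gridAdj_comm.1 hvu), gridAdj_iff_l1dist_eq_one.1 hvw] at this
    omega

theorem exists_pair_l1dist_le_two {K : Set (Fin d → Fin n)} {𝒞 : Finset (Set (Fin d → Fin n))}
    (hK : IsCube (cl K)) (h𝒞 : ⋃₀ (𝒞 : Set (Set (Fin d → Fin n))) = K)
    (hne : ∀ P ∈ 𝒞, P.Nonempty) (h𝒞card : 1 < 𝒞.card) :
    ∃ P ∈ 𝒞, ∃ P' ∈ 𝒞, P ≠ P' ∧ ∃ u ∈ cl P, ∃ w ∈ cl P', l1dist u w ≤ 2 := by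
  by_contra! hfar
  -- otherwise the union `U` of the closures of the parts is closed, so it is the box `cl K` ...
  set U := ⋃ P ∈ 𝒞, cl P
  have hKU : cl K = U := by
    refine (bootClosure_subset (h𝒞 ▸ Set.sUnion_subset fun P hP => ?_)
      (isBootClosed_biUnion_of_l1dist (fun P _ => isBootClosed_bootClosure P) hfar)).antisymm
      (Set.iUnion₂_subset fun P hP => bootClosure_mono (h𝒞 ▸ Set.subset_sUnion_of_mem hP))
    exact (subset_bootClosure P).trans (Set.subset_biUnion_of_mem (u := fun P => cl P) hP)
  -- ... and that box would split into two parts with no edge between them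
  obtain ⟨P₀, hP₀, P₁, hP₁, h01⟩ := Finset.one_lt_card.1 h𝒞card
  obtain ⟨p, hp⟩ := hne P₀ hP₀
  obtain ⟨q, hq⟩ := hne P₁ hP₁
  obtain ⟨lo, hi, -, hQ⟩ := isCube_iff.1 hK
  have hpQ : p ∈ Set.Icc lo hi :=
    hQ ▸ hKU ▸ Set.mem_iUnion₂.2 ⟨P₀, hP₀, subset_bootClosure P₀ hp⟩
  have hqQ : q ∈ Set.Icc lo hi :=
    hQ ▸ hKU ▸ Set.mem_iUnion₂.2 ⟨P₁, hP₁, subset_bootClosure P₁ hq⟩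
  have hq₀ : q ∉ cl P₀ := fun h => by
    have := hfar P₀ hP₀ P₁ hP₁ h01 q h q (subset_bootClosure P₁ hq)
    rw [l1dist_self] at this
    omega
  obtain ⟨a, -, b, hb, ha₀, hb₀, hab⟩ :=
    exists_gridAdj_mem_not_mem hpQ hqQ (subset_bootClosure P₀ hp) hq₀
  obtain ⟨P', hP', hbP'⟩ := Set.mem_iUnion₂.1 (hKU ▸ hQ ▸ hb : b ∈ U)
  have := hfar P₀ hP₀ P' hP' (by rintro rfl; exact hb₀ hbP') a ha₀ b hbP'
  rw [gridAdj_iff_l1dist_eq_one.1 hab] at this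
  omega

structure IsCubePartition (K : Set (Fin d → Fin n)) (𝒞 : Finset (Set (Fin d → Fin n))) :
    Prop where
  pairwiseDisjoint : (𝒞 : Set (Set (Fin d → Fin n))).PairwiseDisjoint id
  nonempty : ∀ P ∈ 𝒞, P.Nonempty
  isCube : ∀ P ∈ 𝒞, IsCube (cl P)
  sUnion_eq : ⋃₀ (𝒞 : Set (Set (Fin d → Fin n))) = K

theorem exists_isCubePartition_card_eq_ncard (K : Set (Fin d → Fin n)) :
    ∃ 𝒞, IsCubePartition K 𝒞 ∧ 𝒞.card = K.ncard := by
  refine ⟨(Set.toFinite K).toFinset.image fun x => ({x} : Set (Fin d → Fin n)),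
    ⟨?_, ?_, ?_, ?_⟩, ?_⟩
  · rw [Finset.coe_image]
    rintro _ ⟨x, -, rfl⟩ _ ⟨y, -, rfl⟩ hxy
    exact Set.disjoint_singleton.2 fun h => hxy (h ▸ rfl)
  · simp
  · intro P hP
    obtain ⟨x, -, rfl⟩ := Finset.mem_image.1 hP
    rw [(isBootClosed_of_subsingleton le_rfl Set.subsingleton_singleton).bootClosure_eq]
    exact isCube_iff.2 ⟨x, x, le_rfl, (Set.Icc_self x).symm⟩
  · simp
  · rw [Finset.card_image_of_injective _ Set.singleton_injective, Set.ncard_eq_toFinset_card]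

theorem IsCubePartition.exists_merge {K : Set (Fin d → Fin n)}
    {𝒞 : Finset (Set (Fin d → Fin n))} (h : IsCubePartition K 𝒞) {P P' : Set (Fin d → Fin n)}
    (hP : P ∈ 𝒞) (hP' : P' ∈ 𝒞) (hne : P ≠ P') (hcube : IsCube (cl (P ∪ P'))) :
    ∃ 𝒟, IsCubePartition K 𝒟 ∧ 𝒟.card + 1 = 𝒞.card := by
  set ℛ := (𝒞.erase P).erase P'
  have hP'e : P' ∈ 𝒞.erase P := Finset.mem_erase.2 ⟨hne.symm, hP'⟩
  have hℛ : ℛ ⊆ 𝒞 := (Finset.erase_subset _ _).trans (Finset.erase_subset _ _)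
  have h𝒞 : insert P (insert P' ℛ) = 𝒞 := by
    rw [Finset.insert_erase hP'e, Finset.insert_erase hP]
  have hdisj : ∀ R ∈ ℛ, Disjoint (P ∪ P') R := fun R hR => by
    obtain ⟨hRP', hR'⟩ := Finset.mem_erase.1 hR
    obtain ⟨hRP, hR⟩ := Finset.mem_erase.1 hR'
    exact Set.disjoint_union_left.2
      ⟨h.pairwiseDisjoint hP hR (Ne.symm hRP), h.pairwiseDisjoint hP' hR (Ne.symm hRP')⟩
  have hnot : P ∪ P' ∉ ℛ := fun hmem => by
    obtain ⟨x, hx⟩ := h.nonempty P hP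
    exact Set.disjoint_left.1 (hdisj _ hmem) (Or.inl hx) (Or.inl hx)
  refine ⟨insert (P ∪ P') ℛ, ⟨?_, ?_, ?_, ?_⟩, ?_⟩
  · rw [Finset.coe_insert]
    exact (h.pairwiseDisjoint.subset hℛ).insert fun R hR _ => hdisj R hR
  · intro R hR
    rcases Finset.mem_insert.1 hR with rfl | hR
    exacts [(h.nonempty P hP).mono Set.subset_union_left, h.nonempty R (hℛ hR)]
  · intro R hR
    rcases Finset.mem_insert.1 hR with rfl | hR
    exacts [hcube, h.isCube R (hℛ hR)]
  · rw [← h.sUnion_eq, ← h𝒞]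
    simp only [Finset.coe_insert, Set.sUnion_insert, Set.union_assoc]
  · rw [Finset.card_insert_of_notMem hnot, Finset.card_erase_add_one hP'e,
      Finset.card_erase_add_one hP]

theorem IsCubePartition.exists_card_eq_two {K : Set (Fin d → Fin n)}
    {𝒞 : Finset (Set (Fin d → Fin n))} (hK : IsCube (cl K)) (h : IsCubePartition K 𝒞)
    (h𝒞 : 2 ≤ 𝒞.card) : ∃ 𝒟, IsCubePartition K 𝒟 ∧ 𝒟.card = 2 := by
  obtain ⟨N, hN⟩ : ∃ N, 𝒞.card = N := ⟨_, rfl⟩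
  induction N generalizing 𝒞 with
  | zero => omega
  | succ N ih =>
    by_cases h2 : N + 1 = 2
    · exact ⟨𝒞, h, hN.trans h2⟩
    obtain ⟨P, hP, P', hP', hne, u, hu, w, hw, huw⟩ :=
      exists_pair_l1dist_le_two hK h.sUnion_eq h.nonempty (by omega)
    obtain ⟨𝒟, h𝒟, h𝒟card⟩ := h.exists_merge hP hP' hne
      (isCube_bootClosure_union (h.isCube P hP) (h.isCube P' hP') hu hw huw)
    exact ih h𝒟 (by omega) (by omega)

theorem exists_isCube_split {K : Set (Fin d → Fin n)} (hK : IsCube (cl K))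
    (hKcard : 1 < K.ncard) :
    ∃ X Y, Disjoint X Y ∧ X.Nonempty ∧ Y.Nonempty ∧ X ∪ Y = K ∧ IsCube (cl X) ∧ IsCube (cl Y) := by
  obtain ⟨𝒞, h𝒞, h𝒞card⟩ := exists_isCubePartition_card_eq_ncard K
  obtain ⟨𝒟, h𝒟, h𝒟card⟩ := h𝒞.exists_card_eq_two hK (h𝒞card ▸ hKcard)
  obtain ⟨X, Y, hXY, rfl⟩ := Finset.card_eq_two.1 h𝒟card
  have hX : X ∈ ({X, Y} : Finset _) := Finset.mem_insert_self X _
  have hY : Y ∈ ({X, Y} : Finset _) := Finset.mem_insert_of_mem (Finset.mem_singleton_self Y)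
  refine ⟨X, Y, h𝒟.pairwiseDisjoint hX hY hXY, h𝒟.nonempty X hX, h𝒟.nonempty Y hY, ?_,
    h𝒟.isCube X hX, h𝒟.isCube Y hY⟩
  simpa using h𝒟.sUnion_eq

end Grid

/-- If a cube `Q` of dimension at least 1 is internally spanned,
then it is spanned by two disjointly internally spanned proper subcubes. -/
theorem span_from_two_subcubes {n d : ℕ} (Q : Set (Fin d → Fin n)) (hQ : IsCube Q)
    (hdim : 1 ≤ cubeDim Q) (A : Set (Fin d → Fin n)) (hspan : IntSpans n d A Q) :
    ∃ S T A₁ A₂ : Set (Fin d → Fin n),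
      IsCube S ∧ IsCube T ∧ S ⊆ Q ∧ T ⊆ Q ∧ S ≠ Q ∧ T ≠ Q ∧
      A₁ ⊆ A ∩ Q ∧ A₂ ⊆ A ∩ Q ∧ Disjoint A₁ A₂ ∧
      bootClosure (gridAdj n d) 2 A₁ = S ∧ bootClosure (gridAdj n d) 2 A₂ = T ∧
      bootClosure (gridAdj n d) 2 (S ∪ T) = Q := by
  obtain ⟨K, hKA, hKmin⟩ := exists_minimal_le_of_wellFoundedLT
    (fun K => bootClosure (gridAdj n d) 2 K = Q) (A ∩ Q) hspan
  have hKQ : bootClosure (gridAdj n d) 2 K = Q := hKmin.prop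
  have hKcard : 1 < K.ncard := by
    by_contra! h
    have hK := Set.ncard_le_one_iff_subsingleton.1 h
    rw [(isBootClosed_of_subsingleton le_rfl hK).bootClosure_eq] at hKQ
    have := cubeDim_eq_zero_of_subsingleton (hKQ ▸ hK)
    omega
  obtain ⟨X, Y, hXY, hX, hY, hXYK, hXcube, hYcube⟩ := exists_isCube_split (hKQ ▸ hQ) hKcard
  have hproper : ∀ {Z W}, Disjoint Z W → W.Nonempty → Z ∪ W = K →
      bootClosure (gridAdj n d) 2 Z ≠ Q := fun hZW ⟨w, hw⟩ hZWK hZ =>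
    hZW.notMem_of_mem_right hw (hKmin.2 hZ (hZWK ▸ Set.subset_union_left)
      (hZWK ▸ Set.subset_union_right hw))
  have hXK : X ⊆ K := hXYK ▸ Set.subset_union_left
  have hYK : Y ⊆ K := hXYK ▸ Set.subset_union_right
  refine ⟨_, _, X, Y, hXcube, hYcube, hKQ ▸ bootClosure_mono hXK, hKQ ▸ bootClosure_mono hYK,
    hproper hXY hY hXYK, hproper hXY.symm hX (Set.union_comm X Y ▸ hXYK), hXK.trans hKA,
    hYK.trans hKA, hXY, rfl, rfl, ?_⟩
  rw [bootClosure_union_bootClosure, hXYK, hKQ]
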